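/- Let p : X̂ → X be an lpc₀-covering map with p_*π₁(X̂, x̂₀) = H ≤ π₁(X, x₀), where X is locally path connected and H-SLT at x₀. If the fiber p⁻¹(x₀) is finite, then p is a semicovering map. -/

import Mathlib

open Set TopologicalSpace unitInterval

universe u

namespace SLTF

attribute [local instance] Path.Homotopic.setoid

variable {X : Type u} [TopologicalSpace X]

/-- The homotopy class of a loop as an element of the fundamental group. -/
noncomputable def fl {x : X} (γ : Path x x) : FundamentalGroup X x :=
  @FundamentalGroup.fromPath X _ x ⟦γ⟧

/-- Multiplication of fundamental-group elements in path-concatenation order: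
`pmul a b` is the class of "`a` followed by `b`". -/
noncomputable def pmul {x : X} (a b : FundamentalGroup X x) : FundamentalGroup X x :=
  @FundamentalGroup.fromPath X _ x
    (Path.Homotopic.Quotient.trans (@FundamentalGroup.toPath X _ x a)
      (@FundamentalGroup.toPath X _ x b))

/-- A path in `X` starting at the base point `x`, recorded together with its end point. -/
structure PPath (X : Type u) [TopologicalSpace X] (x : X) where
  target : X
  path : Path x target

/-- Two paths starting at `x` are identified when they have the same end point and the
class of `α ⬝ β⁻¹` satisfies the predicate `P` (e.g. membership in a subgroup `H`). -/
def HRel (x : X) (P : Path x x → Prop) (α β : PPath X x) : Prop :=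
  ∃ h : α.target = β.target, P (α.path.trans ((β.path.cast rfl h).symm))

/-- The set `X̃` of `P`-equivalence classes of paths starting at `x`. -/
def Xtilde (x : X) (P : Path x x → Prop) : Type u := Quot (HRel x P)

/-- The class of a path in `X̃`. -/
def mkX (x : X) (P : Path x x → Prop) (α : PPath X x) : Xtilde x P := Quot.mk _ α

/-- The basic whisker-open set `([α], U)`: all classes of prolongations of `α` by a path in `U`. -/
def whBasic (x : X) (P : Path x x → Prop) (α : PPath X x) (U : Set X) : Set (Xtilde x P) :=
  { q | ∃ (y : X) (β : Path α.target y), range ⇑β ⊆ U ∧ q = mkX x P ⟨y, α.path.trans β⟩ }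

/-- The whisker topology on `X̃`, generated by the sets `([α], U)` for `U` an open
neighbourhood of the end point of `α`. -/
instance whTop (x : X) (P : Path x x → Prop) : TopologicalSpace (Xtilde x P) :=
  generateFrom
    { S | ∃ (α : PPath X x) (U : Set X), IsOpen U ∧ α.target ∈ U ∧ S = whBasic x P α U }

/-- The endpoint projection `p : X̃ → X`. -/
def endpt (x : X) (P : Path x x → Prop) : Xtilde x P → X :=
  Quot.lift (fun α => α.target) (fun _ _ h => h.elim fun e _ => e)

/-- The space of paths in `X` starting at `x`, with the compact-open topology. -/
def PSp (X : Type u) [TopologicalSpace X] (x : X) : Type u := { f : C(I, X) // f 0 = x }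

instance (x : X) : TopologicalSpace (PSp X x) := instTopologicalSpaceSubtype

/-- The natural surjection from the path space onto `X̃`. -/
def toXt (x : X) (P : Path x x → Prop) : PSp X x → Xtilde x P :=
  fun f => mkX x P ⟨f.1 1, ⟨f.1, f.2, rfl⟩⟩

/-- The quotient of the compact-open topology on `X̃`. -/
def topTop (x : X) (P : Path x x → Prop) : TopologicalSpace (Xtilde x P) :=
  coinduced (toXt x P) inferInstance

/-- Membership in a subgroup `H`, as a predicate on loops. -/
noncomputable def loopMem (x : X) (H : Subgroup (FundamentalGroup X x)) : Path x x → Prop :=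
  fun γ => fl γ ∈ H

/-- `X̃_H`, the classes of paths starting at `x₀` modulo `H`. -/
abbrev XtildeH (x₀ : X) (H : Subgroup (FundamentalGroup X x₀)) : Type u :=
  Xtilde x₀ (loopMem x₀ H)

/-- The fiber of the endpoint projection over `y`, with the subspace (whisker) topology. -/
abbrev Fib (x : X) (P : Path x x → Prop) (y : X) : Type u :=
  { q : Xtilde x P // endpt x P q = y }

/-- The class in the fiber over `y` of a path from `x` to `y`. -/
def mkFib (x : X) (P : Path x x → Prop) {y : X} (δ : Path x y) : Fib x P y :=
  ⟨mkX x P ⟨y, δ⟩, rfl⟩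

/-- The whisker topology on the fundamental group `π₁(X, x)`: basic neighbourhoods of `a`
are the sets `{a ⋆ [γ] : γ a loop in U at x}` for `U` an open neighbourhood of `x`. -/
noncomputable def whPi1 (x : X) : TopologicalSpace (FundamentalGroup X x) :=
  generateFrom
    { S | ∃ (a : FundamentalGroup X x) (U : Set X), IsOpen U ∧ x ∈ U ∧
        S = { b | ∃ γ : Path x x, range ⇑γ ⊆ U ∧ b = pmul a (fl γ) } }

/-- The quotient topology on `π₁(X, x)` induced from the loop space with the
compact-open topology. -/
noncomputable def qtopPi1 (x : X) : TopologicalSpace (FundamentalGroup X x) :=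
  coinduced (fun γ : Path x x => fl γ) inferInstance

/-- `X` is `H`-SLT at `x₀`. -/
noncomputable def IsHSLTAt (x₀ : X) (H : Subgroup (FundamentalGroup X x₀)) : Prop :=
  ∀ (y : X) (α : Path x₀ y) (U : Set X), IsOpen U → x₀ ∈ U →
    ∃ V : Set X, IsOpen V ∧ y ∈ V ∧
      ∀ β : Path y y, range ⇑β ⊆ V →
        ∃ γ : Path x₀ x₀, range ⇑γ ⊆ U ∧
          fl ((α.trans (β.trans α.symm)).trans γ.symm) ∈ H

/-- `X` is SLT at `x`. -/
def IsSLTAt (X : Type u) [TopologicalSpace X] (x : X) : Prop :=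
  ∀ (y : X) (α : Path x y) (U : Set X), IsOpen U → x ∈ U →
    ∃ V : Set X, IsOpen V ∧ y ∈ V ∧
      ∀ β : Path y y, range ⇑β ⊆ V →
        ∃ γ : Path x x, range ⇑γ ⊆ U ∧ (α.trans (β.trans α.symm)).Homotopic γ

/-- `X` is an SLT space. -/
def IsSLT (X : Type u) [TopologicalSpace X] : Prop := ∀ x : X, IsSLTAt X x

/-- `α` (a path from `x` to `y`) is an `H`-SLT path: for every path `lam` from `x₀` to `x`
and open `U ∋ x` there is an open `V ∋ y` such that every loop `β` in `V` at `y` transfers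
to a loop `γ` in `U` at `x` with `[α ⋆ β ⋆ α⁻¹ ⋆ γ⁻¹] ∈ [lam⁻¹ H lam]`, i.e.
`[lam ⋆ (α ⋆ β ⋆ α⁻¹ ⋆ γ⁻¹) ⋆ lam⁻¹] ∈ H`. -/
noncomputable def IsHSLTPath (x₀ : X) (H : Subgroup (FundamentalGroup X x₀)) {x y : X}
    (α : Path x y) : Prop :=
  ∀ (lam : Path x₀ x) (U : Set X), IsOpen U → x ∈ U →
    ∃ V : Set X, IsOpen V ∧ y ∈ V ∧
      ∀ β : Path y y, range ⇑β ⊆ V →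
        ∃ γ : Path x x, range ⇑γ ⊆ U ∧
          fl (lam.trans ((((α.trans (β.trans α.symm)).trans γ.symm)).trans lam.symm)) ∈ H

/-- `X` is an `H`-SLT space: for every `x` and every path `lam` from `x₀` to `x`, `X` is
`[lam⁻¹ H lam]`-SLT at `x`. -/
noncomputable def IsHSLTSpace (x₀ : X) (H : Subgroup (FundamentalGroup X x₀)) : Prop :=
  ∀ (x y : X) (α : Path x y), IsHSLTPath x₀ H α

/-- Membership in the conjugate subgroup `[lam⁻¹ H lam]` of `π₁(X, x)`,
as a predicate on loops at `x`. -/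
noncomputable def conjMem (x₀ : X) (H : Subgroup (FundamentalGroup X x₀)) {x : X}
    (lam : Path x₀ x) : Path x x → Prop :=
  fun δ => fl (lam.trans (δ.trans lam.symm)) ∈ H

/-- `X` is homotopically Hausdorff relative to `H`. -/
noncomputable def HomHausdorffRel (x₀ : X) (H : Subgroup (FundamentalGroup X x₀)) : Prop :=
  ∀ (y : X) (α : Path x₀ y) (g : FundamentalGroup X x₀), g ∉ H →
    ∃ U : Set X, IsOpen U ∧ y ∈ U ∧
      ∀ γ : Path y y, range ⇑γ ⊆ U →
        ¬ ∃ h ∈ H, fl (α.trans (γ.trans α.symm)) = pmul h g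

/-- `X` is homotopically path Hausdorff relative to `H`. -/
noncomputable def HomPathHausdorffRel (x₀ : X) (H : Subgroup (FundamentalGroup X x₀)) : Prop :=
  ∀ (y : X) (α β : Path x₀ y), fl (α.trans β.symm) ∉ H →
    ∃ (n : ℕ) (t : Fin (n + 1) → I) (U : Fin n → Set X),
      t 0 = 0 ∧ t (Fin.last n) = 1 ∧ StrictMono t ∧
      (∀ i : Fin n, IsOpen (U i)) ∧
      (∀ i : Fin n, ⇑α '' Set.Icc (t i.castSucc) (t i.succ) ⊆ U i) ∧
      ∀ γ : Path x₀ y,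
        (∀ i : Fin n, ⇑γ '' Set.Icc (t i.castSucc) (t i.succ) ⊆ U i) →
        (∀ i : Fin (n + 1), γ (t i) = α (t i)) →
        fl (γ.trans β.symm) ∉ H

/-- The endpoint projection `p : X̃ → X` (with the whisker topology on `X̃`) has the
unique path lifting property. -/
def UPLP (x : X) (P : Path x x → Prop) : Prop :=
  ∀ g₁ g₂ : C(I, Xtilde x P), g₁ 0 = g₂ 0 →
    (∀ t, endpt x P (g₁ t) = endpt x P (g₂ t)) → g₁ = g₂

/-- A semicovering map: a local homeomorphism with (continuous) unique lifting of paths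
and of homotopies. -/
structure IsSemicovering {Y : Type u} [TopologicalSpace Y] (p : Y → X) : Prop where
  localHomeo : IsLocalHomeomorph p
  pathLift : ∀ (y : Y) (γ : C(I, X)), γ 0 = p y →
    ∃! γh : C(I, Y), γh 0 = y ∧ ∀ t, p (γh t) = γ t
  contPathLift : ∀ y : Y, ∃ L : { γ : C(I, X) // γ 0 = p y } → C(I, Y),
    Continuous L ∧ ∀ γ, (L γ) 0 = y ∧ ∀ t, p ((L γ) t) = (γ : C(I, X)) t
  homotopyLift : ∀ (y : Y) (Φ : C(I × I, X)), Φ (0, 0) = p y →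
    ∃! Φh : C(I × I, Y), Φh (0, 0) = y ∧ ∀ z, p (Φh z) = Φ z
  contHomotopyLift : ∀ y : Y, ∃ L : { Φ : C(I × I, X) // Φ (0, 0) = p y } → C(I × I, Y),
    Continuous L ∧ ∀ Φ, (L Φ) (0, 0) = y ∧ ∀ z, p ((L Φ) z) = (Φ : C(I × I, X)) z

/-- An `lpc₀`-covering map with `p₊π₁(Y, ·) = H`: a map which is equivalent, as a map
over `X`, to the endpoint projection `p_H : X̃_H → X` having the unique path lifting
property (with `Y` path connected and locally path connected). -/
structure IsLpc0Covering {Y : Type u} [TopologicalSpace Y] (p : Y → X) (x₀ : X)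
    (H : Subgroup (FundamentalGroup X x₀)) : Prop where
  pathConnected : PathConnectedSpace Y
  locPathConnected : LocPathConnectedSpace Y
  uplp : UPLP x₀ (loopMem x₀ H)
  equiv : ∃ φ : Y ≃ₜ XtildeH x₀ H, ∀ y, endpt x₀ (loopMem x₀ H) (φ y) = p y

/-- The homomorphism induced by `p` on fundamental groups, as a function. -/
noncomputable def pStar {Y : Type u} [TopologicalSpace Y] (p : C(Y, X)) (y₀ : Y) :
    FundamentalGroup Y y₀ → FundamentalGroup X (p y₀) :=
  fun g => @FundamentalGroup.fromPath X _ (p y₀)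
    (Path.Homotopic.Quotient.map (@FundamentalGroup.toPath Y _ y₀ g) p)


/-!
The endpoint projection `p_H : X̃_H → X` is continuous and, `X` being locally path connected,
open. Using the unique path lifting property it lifts every map `Φ` from a simply connected,
locally path connected space: send `z` to the class of `ρ ⋆ Φ(γ)` for any path `γ` from the base
point to `z`.

Finiteness of the fibre makes `p_H` a local homeomorphism. If a point `q ≠ [ρ]` of the fibre
could be reached from `[ρ]` by arbitrarily small loops, every neighbourhood of `q` would contain
`[ρ]`; the path that stays at `[ρ]` and jumps to `q` at time `1` would then be continuous, and a
second lift of a constant path. Discarding the finitely many other points of the fibre leaves a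
basic neighbourhood `([ρ], V)` on which `p_H` is injective.

For a local homeomorphism with unique lifts from a compact regular space, the lifting operator
is continuous in the compact-open topology: near a given lift it is obtained by gluing finitely
many local inverses.
-/

open CategoryTheory Topology

instance : ContractibleSpace I :=
  (convex_Icc (0 : ℝ) 1).contractibleSpace ⟨0, le_rfl, zero_le_one⟩

instance : LocallyPathConnectedSpace I :=
  (convex_Icc (0 : ℝ) 1).locallyPathConnectedSpace

section Lifting

variable {E B Z : Type*} [TopologicalSpace E] [TopologicalSpace B] [TopologicalSpace Z]

def HasUniqueLifts (p : E → B) (z₀ : Z) : Prop :=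
  ∀ (e : E) (Φ : C(Z, B)), Φ z₀ = p e → ∃! Ψ : C(Z, E), Ψ z₀ = e ∧ ∀ z, p (Ψ z) = Φ z

lemma HasUniqueLifts.comp_homeomorph {p : E → B} {z₀ : Z} (h : HasUniqueLifts p z₀)
    {Y : Type*} [TopologicalSpace Y] (φ : Y ≃ₜ E) : HasUniqueLifts (p ∘ φ) z₀ := by
  intro y Φ hΦ
  obtain ⟨Ψ, ⟨hΨ₀, hΨ⟩, huniq⟩ := h (φ y) Φ hΦ
  refine ⟨(φ.symm : C(E, Y)).comp Ψ, ⟨by simp [hΨ₀], fun z => by simp [hΨ]⟩, ?_⟩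
  rintro Ψ' ⟨hΨ'₀, hΨ'⟩
  have : (φ : C(Y, E)).comp Ψ' = Ψ := huniq _ ⟨by simp [hΨ'₀], hΨ'⟩
  ext z
  simp [← this]

variable {p : E → B} [CompactSpace Z] [RegularSpace Z]

lemma _root_.IsLocalHomeomorph.exists_finite_closed_cover_charts (hp : IsLocalHomeomorph p)
    (Ψ : C(Z, E)) :
    ∃ (s : Finset Z) (K : Z → Set Z) (c : Z → OpenPartialHomeomorph E B),
      (∀ z, IsClosed (K z)) ∧ (∀ z, ⇑(c z) = p) ∧ (∀ z, MapsTo Ψ (K z) (c z).source) ∧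
        ∀ z, ∃ i ∈ s, z ∈ K i := by
  choose c hmem hc using hp
  have hnhds : ∀ z, Ψ ⁻¹' (c (Ψ z)).source ∈ 𝓝 z := fun z =>
    Ψ.continuous.continuousAt.preimage_mem_nhds ((c (Ψ z)).open_source.mem_nhds (hmem _))
  choose K hK hKcl hKsub using fun z => exists_mem_nhds_isClosed_subset (hnhds z)
  obtain ⟨s, -, hs⟩ := isCompact_univ.elim_nhds_subcover K fun z _ => hK z
  refine ⟨s, K, fun z => c (Ψ z), hKcl, fun z => (hc _).symm, hKsub, fun z => ?_⟩
  simpa using hs (mem_univ z)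

lemma _root_.IsLocalHomeomorph.exists_continuous_lift_nhds (hp : IsLocalHomeomorph p)
    {Φ₀ : C(Z, B)} {Ψ₀ : C(Z, E)} (hΨ₀ : ∀ z, p (Ψ₀ z) = Φ₀ z) :
    ∃ N ∈ 𝓝 Φ₀, ∃ u : ↥N × Z → E, Continuous u ∧ (∀ Φ z, p (u (Φ, z)) = Φ.1 z) ∧
      ∀ Φ z, Φ.1 z = Φ₀ z → u (Φ, z) = Ψ₀ z := by
  obtain ⟨s, K, c, hKcl, hc, hΨK, hcov⟩ := hp.exists_finite_closed_cover_charts Ψ₀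
  choose cell hcell_mem hcell using hcov
  have hleft : ∀ i w, w ∈ (c i).source → (c i).symm (p w) = w := fun i w hw => by
    rw [← hc i]; exact (c i).left_inv hw
  set N : Set C(Z, B) := {Φ | ∀ i ∈ s, ∀ j ∈ s,
    MapsTo Φ (K i ∩ K j) (p '' ((c i).source ∩ (c j).source))} with hN
  have hNopen : IsOpen N := by
    simp only [hN, ofPred_forall]
    refine isOpen_biInter_finset fun i _ => isOpen_biInter_finset fun j _ => ?_
    exact ContinuousMap.isOpen_setOfPred_mapsTo ((hKcl i).inter (hKcl j)).isCompact
      (hp.isOpenMap _ ((c i).open_source.inter (c j).open_source))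
  have hΦ₀N : Φ₀ ∈ N := fun i _ j _ z hz => ⟨Ψ₀ z, ⟨hΨK i hz.1, hΨK j hz.2⟩, hΨ₀ z⟩
  have hcompat : ∀ Φ ∈ N, ∀ i ∈ s, ∀ z ∈ K i,
      (c i).symm (Φ z) = (c (cell z)).symm (Φ z) ∧ Φ z ∈ (c i).target := by
    intro Φ hΦ i hi z hz
    obtain ⟨w, ⟨hwi, hwj⟩, hw⟩ := hΦ i hi (cell z) (hcell_mem z) ⟨hz, hcell z⟩
    rw [← hw, hleft i w hwi, hleft _ w hwj]
    exact ⟨rfl, hc i ▸ (c i).map_source hwi⟩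
  let u : ↥N × Z → E := fun q => (c (cell q.2)).symm (q.1.1 q.2)
  have heval : Continuous fun q : ↥N × Z => q.1.1 q.2 :=
    continuous_eval.comp ((continuous_subtype_val.comp continuous_fst).prodMk continuous_snd)
  have hu : Continuous u := by
    refine (locallyFinite_of_finite fun i : s => (univ ×ˢ K i : Set (↥N × Z))).continuous
      ?_ (fun i => isClosed_univ.prod (hKcl i)) fun i => ?_
    · exact eq_univ_of_forall fun q => mem_iUnion.2 ⟨⟨_, hcell_mem q.2⟩, mem_univ _, hcell q.2⟩
    · refine ((c i).continuousOn_symm.comp heval.continuousOn ?_).congr ?_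
      · rintro q ⟨-, hq⟩
        exact (hcompat q.1.1 q.1.2 i i.2 q.2 hq).2
      · rintro q ⟨-, hq⟩
        exact (hcompat q.1.1 q.1.2 i i.2 q.2 hq).1.symm
  refine ⟨N, hNopen.mem_nhds hΦ₀N, u, hu, fun Φ z => ?_, fun Φ z hz => ?_⟩
  · have := (c (cell z)).right_inv (hcompat Φ.1 Φ.2 _ (hcell_mem z) z (hcell z)).2
    rwa [hc] at this
  · simp only [u, hz, ← hΨ₀ z]
    exact hleft _ _ (hΨK _ (hcell z))

lemma _root_.IsLocalHomeomorph.exists_continuous_lift (hp : IsLocalHomeomorph p) {z₀ : Z}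
    (h : HasUniqueLifts p z₀) (e₀ : E) :
    ∃ L : {Φ : C(Z, B) // Φ z₀ = p e₀} → C(Z, E),
      Continuous L ∧ ∀ Φ, L Φ z₀ = e₀ ∧ ∀ z, p (L Φ z) = Φ.1 z := by
  choose L hL using fun Φ : {Φ : C(Z, B) // Φ z₀ = p e₀} => (h e₀ Φ.1 Φ.2).exists
  refine ⟨L, continuous_iff_continuousAt.2 fun Φ₀ => ?_, hL⟩
  obtain ⟨N, hN, u, hu, hup, hu₀⟩ := hp.exists_continuous_lift_nhds (hL Φ₀).2
  have hL_eq : ∀ Φ (hΦ : Φ.1 ∈ N), L Φ = ContinuousMap.curry ⟨u, hu⟩ ⟨Φ.1, hΦ⟩ :=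
    fun Φ hΦ => (h e₀ Φ.1 Φ.2).unique (hL Φ)
      ⟨(hu₀ ⟨Φ.1, hΦ⟩ z₀ (Φ.2.trans Φ₀.2.symm)).trans (hL Φ₀).1, fun z => hup _ z⟩
  refine ContinuousOn.continuousAt ?_
    (continuous_subtype_val.continuousAt.preimage_mem_nhds hN)
  rw [continuousOn_iff_continuous_domRestrict]
  have : (Subtype.val ⁻¹' N).domRestrict L =
      fun Φ => ContinuousMap.curry ⟨u, hu⟩ ⟨Φ.1.1, Φ.2⟩ := funext fun Φ => hL_eq Φ.1 Φ.2
  rw [this]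
  fun_prop

end Lifting

lemma IsSemicovering.of_hasUniqueLifts {Y : Type u} [TopologicalSpace Y] {p : Y → X}
    (hp : IsLocalHomeomorph p) (hI : HasUniqueLifts p (0 : I))
    (hII : HasUniqueLifts p ((0, 0) : I × I)) : IsSemicovering p :=
  ⟨hp, hI, hp.exists_continuous_lift hI, hII, hp.exists_continuous_lift hII⟩

noncomputable def arr {x y : X} (γ : Path x y) :
    FundamentalGroupoid.mk x ⟶ FundamentalGroupoid.mk y := ⟦γ⟧

lemma arr_trans {x y z : X} (γ : Path x y) (δ : Path y z) :
    arr (γ.trans δ) = arr γ ≫ arr δ := by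
  rw [FundamentalGroupoid.comp_eq]; rfl

lemma arr_symm {x y : X} (γ : Path x y) : arr γ.symm = Groupoid.inv (arr γ) := rfl

lemma homotopic_of_arr_eq {x y : X} {γ γ' : Path x y} (h : arr γ = arr γ') : γ.Homotopic γ' :=
  Quotient.exact h

lemma fl_eq_of_homotopic {x : X} {γ γ' : Path x x} (h : γ.Homotopic γ') : fl γ = fl γ' :=
  Quotient.sound h

lemma fl_trans_symm_self {x y : X} (δ : Path x y) : fl (δ.trans δ.symm) = 1 :=
  fl_eq_of_homotopic ⟨(Path.Homotopy.reflTransSymm δ).symm⟩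

lemma UPLP.eq_of_specializes {x : X} {P : Path x x → Prop} (hU : UPLP x P) {a b : Xtilde x P}
    (hab : a ⤳ b) (he : endpt x P a = endpt x P b) : a = b := by
  classical
  let γ : C(I, Xtilde x P) := ⟨piecewise {1} (fun _ => b) (fun _ => a),
    isClosed_singleton.continuous_piecewise_of_specializes continuous_const continuous_const
      fun _ => hab⟩
  have := hU (.const I a) γ (by simp [γ]) fun t => by by_cases ht : t = 1 <;> simp [γ, ht, he]
  simpa [γ] using DFunLike.congr_fun this 1

lemma UPLP.eq_of_lift {Z : Type*} [TopologicalSpace Z] [PathConnectedSpace Z] {x : X}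
    {P : Path x x → Prop} (hU : UPLP x P) {z₀ : Z} {Ψ₁ Ψ₂ : C(Z, Xtilde x P)}
    (h₀ : Ψ₁ z₀ = Ψ₂ z₀) (h : ∀ z, endpt x P (Ψ₁ z) = endpt x P (Ψ₂ z)) : Ψ₁ = Ψ₂ := by
  ext z
  let γ : C(I, Z) := (PathConnectedSpace.somePath z₀ z).toContinuousMap
  have := hU (Ψ₁.comp γ) (Ψ₂.comp γ) (by simpa [γ] using h₀) fun t => h (γ t)
  simpa [γ] using DFunLike.congr_fun this 1

section WhiskerSpace

variable {x₀ : X} {H : Subgroup (FundamentalGroup X x₀)}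

local notation "⟦" δ "⟧ₕ" => mkX x₀ (loopMem x₀ H) ⟨_, δ⟩

local notation "𝔭" => endpt x₀ (loopMem x₀ H)

variable (x₀ H) in
lemma hRel_equivalence : Equivalence (HRel x₀ (loopMem x₀ H)) where
  refl := fun ⟨_, δ⟩ => ⟨rfl, show fl (δ.trans δ.symm) ∈ H by
    rw [fl_trans_symm_self]; exact one_mem H⟩
  symm := by
    rintro ⟨y, δ⟩ ⟨y', δ'⟩ ⟨rfl : y = y', hδ⟩
    refine ⟨rfl, show fl (δ'.trans δ.symm) ∈ H from ?_⟩
    rw [← Path.symm_symm δ', ← Path.trans_symm]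
    exact inv_mem hδ
  trans := by
    rintro ⟨y, δ⟩ ⟨y', δ'⟩ ⟨y'', δ''⟩ ⟨rfl : y = y', hδ⟩ ⟨rfl : y = y'', hδ'⟩
    refine ⟨rfl, show fl (δ.trans δ''.symm) ∈ H from ?_⟩
    have : (δ.trans δ''.symm).Homotopic ((δ.trans δ'.symm).trans (δ'.trans δ''.symm)) :=
      homotopic_of_arr_eq (by simp [arr_trans, arr_symm])
    rw [fl_eq_of_homotopic this]
    exact mul_mem hδ' hδ

lemma cls_eq_cls_iff {y : X} {δ δ' : Path x₀ y} : ⟦δ⟧ₕ = ⟦δ'⟧ₕ ↔ fl (δ.trans δ'.symm) ∈ H := by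
  rw [mkX, mkX]
  show @Eq (Quot (HRel x₀ (loopMem x₀ H))) _ _ ↔ _
  rw [Quot.eq, Equivalence.eqvGen_iff (hRel_equivalence x₀ H)]
  exact ⟨fun ⟨_, h⟩ => h, fun h => ⟨rfl, h⟩⟩

lemma cls_eq_cls_of_homotopic {y : X} {δ δ' : Path x₀ y} (h : δ.Homotopic δ') :
    ⟦δ⟧ₕ = ⟦δ'⟧ₕ := by
  rw [cls_eq_cls_iff, fl_eq_of_homotopic (h.hcomp (.refl δ'.symm)), fl_trans_symm_self]
  exact one_mem H

lemma cls_trans_congr {y z : X} {δ δ' : Path x₀ y} (β : Path y z) (h : ⟦δ⟧ₕ = ⟦δ'⟧ₕ) :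
    ⟦δ.trans β⟧ₕ = ⟦δ'.trans β⟧ₕ := by
  rw [cls_eq_cls_iff] at h ⊢
  have : ((δ.trans β).trans (δ'.trans β).symm).Homotopic (δ.trans δ'.symm) :=
    homotopic_of_arr_eq (by simp [arr_trans, arr_symm])
  rwa [fl_eq_of_homotopic this]

lemma cls_trans_assoc {y z w : X} (δ : Path x₀ y) (β : Path y z) (β' : Path z w) :
    ⟦(δ.trans β).trans β'⟧ₕ = ⟦δ.trans (β.trans β')⟧ₕ :=
  cls_eq_cls_of_homotopic ⟨.transAssoc δ β β'⟩

lemma cls_trans_refl {y : X} (δ : Path x₀ y) : ⟦δ.trans (.refl y)⟧ₕ = ⟦δ⟧ₕ :=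
  cls_eq_cls_of_homotopic ⟨.transRefl δ⟩

lemma cls_trans_trans_symm {y z : X} (δ : Path x₀ y) (β : Path y z) :
    ⟦(δ.trans β).trans β.symm⟧ₕ = ⟦δ⟧ₕ :=
  cls_eq_cls_of_homotopic (homotopic_of_arr_eq (by simp [arr_trans, arr_symm]))

lemma target_eq_of_cls_eq {y y' : X} {δ : Path x₀ y} {δ' : Path x₀ y'} (h : ⟦δ⟧ₕ = ⟦δ'⟧ₕ) :
    y = y' :=
  congrArg 𝔭 h

lemma XtildeH.ind {motive : XtildeH x₀ H → Prop} (h : ∀ (y : X) (ρ : Path x₀ y), motive ⟦ρ⟧ₕ)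
    (q : XtildeH x₀ H) : motive q :=
  Quot.ind (fun α => h α.target α.path) q

lemma cls_mem_whBasic_self {α : PPath X x₀} {U : Set X} (h : α.target ∈ U) :
    mkX x₀ (loopMem x₀ H) α ∈ whBasic x₀ (loopMem x₀ H) α U :=
  ⟨α.target, .refl _, range_subset_iff.2 fun _ => h, (cls_trans_refl α.path).symm⟩

lemma whBasic_mono (α : PPath X x₀) {U V : Set X} (h : U ⊆ V) :
    whBasic x₀ (loopMem x₀ H) α U ⊆ whBasic x₀ (loopMem x₀ H) α V := by
  rintro q ⟨y, β, hβ, rfl⟩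
  exact ⟨y, β, hβ.trans h, rfl⟩

lemma isOpen_whBasic {α : PPath X x₀} {U : Set X} (hU : IsOpen U) (h : α.target ∈ U) :
    IsOpen (whBasic x₀ (loopMem x₀ H) α U) :=
  isOpen_generateFrom_of_mem ⟨α, U, hU, h, rfl⟩

lemma mem_of_cls_mem_whBasic {α : PPath X x₀} {U : Set X} {y : X} {ρ : Path x₀ y}
    (h : ⟦ρ⟧ₕ ∈ whBasic x₀ (loopMem x₀ H) α U) : y ∈ U := by
  obtain ⟨y', β, hβ, hq⟩ := h
  obtain rfl : y = y' := target_eq_of_cls_eq hq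
  exact hβ ⟨1, β.target⟩

lemma whBasic_subset_of_mem {α : PPath X x₀} {U : Set X} {y : X} {ρ : Path x₀ y}
    (h : ⟦ρ⟧ₕ ∈ whBasic x₀ (loopMem x₀ H) α U) :
    whBasic x₀ (loopMem x₀ H) ⟨y, ρ⟩ U ⊆ whBasic x₀ (loopMem x₀ H) α U := by
  obtain ⟨y', β, hβ, hq⟩ := h
  obtain rfl : y = y' := target_eq_of_cls_eq hq
  rintro q ⟨z, β', hβ', rfl⟩
  refine ⟨z, β.trans β', by rw [Path.trans_range]; exact union_subset hβ hβ', ?_⟩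
  rw [cls_trans_congr β' hq, cls_trans_assoc]

lemma isTopologicalBasis_whBasic :
    IsTopologicalBasis {S | ∃ (α : PPath X x₀) (U : Set X), IsOpen U ∧ α.target ∈ U ∧
      S = whBasic x₀ (loopMem x₀ H) α U} := by
  refine ⟨?_, ?_, rfl⟩
  · rintro _ ⟨α, U, hU, -, rfl⟩ _ ⟨α', U', hU', -, rfl⟩ q ⟨hq, hq'⟩
    obtain ⟨y, β, hβ, rfl⟩ := hq
    have hyU : y ∈ U := hβ ⟨1, β.target⟩
    have hyU' : y ∈ U' := mem_of_cls_mem_whBasic hq'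
    refine ⟨_, ⟨⟨y, α.path.trans β⟩, U ∩ U', hU.inter hU', ⟨hyU, hyU'⟩, rfl⟩,
      cls_mem_whBasic_self ⟨hyU, hyU'⟩, subset_inter ?_ ?_⟩
    · exact (whBasic_mono _ inter_subset_left).trans
        (whBasic_subset_of_mem ⟨y, β, hβ, rfl⟩)
    · exact (whBasic_mono _ inter_subset_right).trans (whBasic_subset_of_mem hq')
  · refine eq_univ_of_forall fun q => ?_
    induction q using Quot.ind with
    | _ α => exact mem_sUnion.2 ⟨_, ⟨α, univ, isOpen_univ, trivial, rfl⟩,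
        cls_mem_whBasic_self (mem_univ _)⟩

lemma endpt_image_whBasic (α : PPath X x₀) (U : Set X) :
    𝔭 '' whBasic x₀ (loopMem x₀ H) α U = pathComponentIn U α.target := by
  ext z
  constructor
  · rintro ⟨_, ⟨z, β, hβ, rfl⟩, rfl⟩
    exact ⟨β, fun t => hβ ⟨t, rfl⟩⟩
  · rintro ⟨β, hβ⟩
    exact ⟨_, ⟨z, β, range_subset_iff.2 hβ, rfl⟩, rfl⟩

lemma continuous_endpt : Continuous 𝔭 := by
  refine continuous_def.2 fun O hO => isOpen_iff_forall_mem_open.2 fun q hq => ?_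
  induction q using Quot.ind with
  | _ α =>
    refine ⟨whBasic x₀ (loopMem x₀ H) α O, ?_, isOpen_whBasic hO hq, cls_mem_whBasic_self hq⟩
    rintro _ ⟨y, β, hβ, rfl⟩
    exact hβ ⟨1, β.target⟩

lemma isOpenMap_endpt [LocallyPathConnectedSpace X] : IsOpenMap 𝔭 := by
  refine isTopologicalBasis_whBasic.isOpenMap_iff.2 ?_
  rintro _ ⟨α, U, hU, -, rfl⟩
  rw [endpt_image_whBasic]
  exact hU.pathComponentIn _

open Classical in
noncomputable def extendByPath {y z : X} (δ : Path y z) : XtildeH x₀ H → XtildeH x₀ H :=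
  Quot.lift
    (fun α => if h : α.target = y then ⟦(α.path.cast rfl h.symm).trans δ⟧ₕ
      else mkX x₀ (loopMem x₀ H) α)
    (by
      rintro ⟨w, ρ⟩ ⟨w', ρ'⟩ hrel
      obtain ⟨rfl : w = w', -⟩ := id hrel
      have hcls : ⟦ρ⟧ₕ = ⟦ρ'⟧ₕ := Quot.sound hrel
      dsimp only
      split_ifs with h
      · subst h
        exact cls_trans_congr δ hcls
      · exact hcls)

lemma extendByPath_cls {y z : X} (δ : Path y z) (ρ : Path x₀ y) :
    extendByPath δ ⟦ρ⟧ₕ = ⟦ρ.trans δ⟧ₕ :=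
  dif_pos rfl

lemma mapsTo_extendByPath {y z : X} (δ : Path y z) :
    MapsTo (extendByPath (H := H) δ) (𝔭 ⁻¹' {y}) (𝔭 ⁻¹' {z}) := by
  intro q hq
  induction q using XtildeH.ind with
  | h w ρ =>
    obtain rfl : w = y := hq
    rw [mem_preimage, extendByPath_cls]
    rfl

lemma leftInvOn_extendByPath {y z : X} (δ : Path y z) :
    LeftInvOn (extendByPath δ.symm) (extendByPath (H := H) δ) (𝔭 ⁻¹' {y}) := by
  intro q hq
  induction q using XtildeH.ind with
  | h w ρ =>
    obtain rfl : w = y := hq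
    rw [extendByPath_cls, extendByPath_cls]
    exact cls_trans_trans_symm ρ δ

lemma finite_fiber_of_path {y z : X} (δ : Path y z) (hfin : (𝔭 ⁻¹' {y}).Finite) :
    (𝔭 ⁻¹' {z}).Finite :=
  Finite.of_finite_image (hfin.subset (mapsTo_extendByPath δ.symm).image_subset)
    (leftInvOn_extendByPath δ.symm).injOn

lemma cls_specializes_of_forall_loops {y : X} {ρ : Path x₀ y} {q : XtildeH x₀ H}
    (h : ∀ V : Set X, IsOpen V → y ∈ V → ∃ β : Path y y, range β ⊆ V ∧ ⟦ρ.trans β⟧ₕ = q) :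
    ⟦ρ⟧ₕ ⤳ q := by
  obtain ⟨β₀, -, rfl⟩ := h univ isOpen_univ trivial
  refine specializes_iff_forall_open.2 fun O hO hqO => ?_
  obtain ⟨_, ⟨α, U, hU, -, rfl⟩, hqU, hUO⟩ :=
    isTopologicalBasis_whBasic.exists_subset_of_mem_open hqO hO
  obtain ⟨β, hβ, hβq⟩ := h U hU (mem_of_cls_mem_whBasic hqU)
  rw [← hβq] at hqU
  exact hUO (whBasic_subset_of_mem hqU
    ⟨y, β.symm, by rwa [Path.symm_range], (cls_trans_trans_symm ρ β).symm⟩)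

lemma exists_nhds_cls_trans_ne (hU : UPLP x₀ (loopMem x₀ H)) {y : X} (ρ : Path x₀ y)
    {q : XtildeH x₀ H} (hq : 𝔭 q = y) (hne : q ≠ ⟦ρ⟧ₕ) :
    ∃ V : Set X, IsOpen V ∧ y ∈ V ∧ ∀ β : Path y y, range β ⊆ V → ⟦ρ.trans β⟧ₕ ≠ q := by
  by_contra! h
  exact hne (hU.eq_of_specializes (cls_specializes_of_forall_loops h) hq.symm).symm

lemma exists_nhds_cls_trans_eq (hU : UPLP x₀ (loopMem x₀ H)) {y : X} (ρ : Path x₀ y)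
    (hfin : (𝔭 ⁻¹' {y}).Finite) :
    ∃ V : Set X, IsOpen V ∧ y ∈ V ∧ ∀ β : Path y y, range β ⊆ V → ⟦ρ.trans β⟧ₕ = ⟦ρ⟧ₕ := by
  choose! V hVopen hyV hV using fun q (hq : q ∈ 𝔭 ⁻¹' {y} \ {⟦ρ⟧ₕ}) =>
    exists_nhds_cls_trans_ne hU ρ hq.1 hq.2
  refine ⟨⋂ q ∈ 𝔭 ⁻¹' {y} \ {⟦ρ⟧ₕ}, V q, hfin.sdiff.isOpen_biInter hVopen,
    mem_iInter₂.2 hyV, fun β hβ => ?_⟩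
  by_contra hne
  have hmem : ⟦ρ.trans β⟧ₕ ∈ 𝔭 ⁻¹' {y} \ {⟦ρ⟧ₕ} := ⟨rfl, hne⟩
  exact hV _ hmem β (hβ.trans (biInter_subset_of_mem hmem)) rfl

lemma injOn_endpt_whBasic {y : X} {ρ : Path x₀ y} {V : Set X}
    (hV : ∀ β : Path y y, range β ⊆ V → ⟦ρ.trans β⟧ₕ = ⟦ρ⟧ₕ) :
    InjOn 𝔭 (whBasic x₀ (loopMem x₀ H) ⟨y, ρ⟩ V) := by
  rintro _ ⟨z, β, hβ, rfl⟩ _ ⟨z', β', hβ', rfl⟩ (rfl : z = z')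
  calc ⟦ρ.trans β⟧ₕ = ⟦(ρ.trans (β.trans β'.symm)).trans β'⟧ₕ :=
        cls_eq_cls_of_homotopic (homotopic_of_arr_eq (by simp [arr_trans, arr_symm]))
    _ = ⟦ρ.trans β'⟧ₕ := cls_trans_congr β' (hV _ (by
        rw [Path.trans_range, Path.symm_range]; exact union_subset hβ hβ'))

lemma isLocalHomeomorph_endpt [LocallyPathConnectedSpace X] (hU : UPLP x₀ (loopMem x₀ H))
    (hfin : (𝔭 ⁻¹' {x₀}).Finite) : IsLocalHomeomorph 𝔭 := by
  refine isLocalHomeomorph_iff_isOpenEmbedding_restrict.2 fun q => ?_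
  induction q using XtildeH.ind with
  | h y ρ =>
    obtain ⟨V, hVopen, hyV, hV⟩ := exists_nhds_cls_trans_eq hU ρ (finite_fiber_of_path ρ hfin)
    have hN := isOpen_whBasic (H := H) (α := ⟨y, ρ⟩) hVopen hyV
    exact ⟨_, hN.mem_nhds (cls_mem_whBasic_self hyV),
      .of_continuous_injective_isOpenMap (continuous_endpt.comp continuous_subtype_val)
        (injOn_endpt_whBasic hV).injective (isOpenMap_endpt.comp hN.isOpenMap_subtype_val)⟩

variable {Z : Type*} [TopologicalSpace Z] [SimplyConnectedSpace Z]

variable (H) in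
noncomputable def canonicalLift {z₀ : Z} (Φ : C(Z, X)) (ρ : Path x₀ (Φ z₀)) (z : Z) :
    XtildeH x₀ H :=
  ⟦ρ.trans ((PathConnectedSpace.somePath z₀ z).map Φ.continuous)⟧ₕ

lemma canonicalLift_eq {z₀ z : Z} (Φ : C(Z, X)) (ρ : Path x₀ (Φ z₀)) (γ : Path z₀ z) :
    canonicalLift H Φ ρ z = ⟦ρ.trans (γ.map Φ.continuous)⟧ₕ :=
  cls_eq_cls_of_homotopic
    ((Path.Homotopic.refl ρ).hcomp ((SimplyConnectedSpace.paths_homotopic _ γ).map Φ))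

lemma canonicalLift_self {z₀ : Z} (Φ : C(Z, X)) (ρ : Path x₀ (Φ z₀)) :
    canonicalLift H Φ ρ z₀ = ⟦ρ⟧ₕ :=
  (canonicalLift_eq Φ ρ (.refl z₀)).trans (cls_trans_refl ρ)

lemma continuous_canonicalLift [LocallyPathConnectedSpace Z] {z₀ : Z} (Φ : C(Z, X))
    (ρ : Path x₀ (Φ z₀)) : Continuous (canonicalLift H Φ ρ) := by
  refine isTopologicalBasis_whBasic.continuous_iff.2 ?_
  rintro _ ⟨α, U, hU, -, rfl⟩
  refine isOpen_iff_forall_mem_open.2 fun z₁ hz₁ => ?_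
  replace hz₁ : canonicalLift H Φ ρ z₁ ∈ whBasic x₀ (loopMem x₀ H) α U := hz₁
  have hz₁U : Φ z₁ ∈ U := mem_of_cls_mem_whBasic hz₁
  refine ⟨pathComponentIn (Φ ⁻¹' U) z₁, ?_, (hU.preimage Φ.continuous).pathComponentIn z₁,
    mem_pathComponentIn_self hz₁U⟩
  rintro z ⟨δ, hδ⟩
  refine whBasic_subset_of_mem hz₁ ⟨Φ z, δ.map Φ.continuous, range_subset_iff.2 hδ, ?_⟩
  rw [canonicalLift_eq Φ ρ ((PathConnectedSpace.somePath z₀ z₁).trans δ), Path.map_trans,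
    cls_trans_assoc]

lemma hasUniqueLifts_endpt [LocallyPathConnectedSpace Z] (hU : UPLP x₀ (loopMem x₀ H))
    (z₀ : Z) : HasUniqueLifts 𝔭 z₀ := by
  intro q Φ hΦ
  induction q using XtildeH.ind with
  | h w ρ =>
    obtain rfl : Φ z₀ = w := hΦ
    refine ⟨⟨canonicalLift H Φ ρ, continuous_canonicalLift Φ ρ⟩,
      ⟨canonicalLift_self Φ ρ, fun z => rfl⟩, fun Ψ hΨ => ?_⟩
    exact hU.eq_of_lift (hΨ.1.trans (canonicalLift_self Φ ρ).symm) fun z => hΨ.2 z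

end WhiskerSpace

theorem statement19_general {X Y : Type u} [TopologicalSpace X]
    [LocallyPathConnectedSpace X] [TopologicalSpace Y] (p : Y → X) (x₀ : X)
    (H : Subgroup (FundamentalGroup X x₀)) (hcov : IsLpc0Covering p x₀ H)
    (hfin : (p ⁻¹' {x₀}).Finite) :
    IsSemicovering p := by
  obtain ⟨φ, hφ⟩ := hcov.equiv
  obtain rfl : p = endpt x₀ (loopMem x₀ H) ∘ φ := funext fun y => (hφ y).symm
  have hfib : (endpt x₀ (loopMem x₀ H) ⁻¹' {x₀}).Finite := by
    rw [← φ.image_preimage (endpt x₀ (loopMem x₀ H) ⁻¹' {x₀})]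
    exact hfin.image φ
  exact .of_hasUniqueLifts ((isLocalHomeomorph_endpt hcov.uplp hfib).comp φ.isLocalHomeomorph)
    ((hasUniqueLifts_endpt hcov.uplp _).comp_homeomorph φ)
    ((hasUniqueLifts_endpt hcov.uplp _).comp_homeomorph φ)

/-- Let `p : X̂ → X` be an `lpc₀`-covering map with
`p₊π₁(X̂, x̂₀) = H ≤ π₁(X, x₀)`, where `X` is locally path connected and `H`-SLT at `x₀`.
If the fiber `p⁻¹(x₀)` is finite, then `p` is a semicovering map. -/
theorem statement19 {X Y : Type u} [TopologicalSpace X] [PathConnectedSpace X]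
    [LocallyPathConnectedSpace X] [TopologicalSpace Y] (p : Y → X) (x₀ : X)
    (H : Subgroup (FundamentalGroup X x₀)) (hcov : IsLpc0Covering p x₀ H)
    (hslt : IsHSLTAt x₀ H) (hfin : (p ⁻¹' {x₀}).Finite) :
    IsSemicovering p :=
  statement19_general p x₀ H hcov hfin

end SLTF
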